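/- arXiv:2511.16772 — 3 statements merged into one kernel-verified Lean document; each statement's English description precedes it below -/
import Mathlib

section
/- Let p(t) = ∑_{k≥0} p^{(k)}(0) t^k / k! for i = 1,...,u be convergent Taylor series, let n ≥ 1, 0 ≤ l ≤ n, and let m ≥ n. Define v^{z,s} by the identity ∂_t^m ∫_t^{2t}dt_1 ∫_t^{t_1}dt_2 ... ∫_t^{t_{l-1}}dt_l ∫_0^t dt_{l+1} ... ∫_0^{t_{n-1}}dt_n ∏_{i=1}^u p_i(s_{2i} − s_{2i−1}) |_{t=0} = ∑_{z_1+...+z_u = m−n} v^{z,s} ∏_{i=1}^u p_i^{(z_i)}(0), where s_1,...,s_{2u} ∈ {t_1,...,t_n} are distinct time variables. Then |v^{z,s}| ≤ 2^{m−n} m! / ((n−l)! · l! · z_1! ··· z_u!). -/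
/-!
Testing the defining identity on the monomials `p i = X ^ z i` kills every coefficient except
`v z`, which comes multiplied by `∏ i, (z i)!`. For these polynomials the integrand is homogeneous
of degree `m - n` in the time variables, so the substitution `t_j = t τ_j` turns the nested
integral into `t ^ m * C`, where `C` is the same integral at `t = 1`; hence
`v z * ∏ i, (z i)! = m! * C`. At `t = 1` all time variables lie in `[0, 2]`, so the integrand is
bounded by `2 ^ (m - n)`, while the two simplices of integration have volumes `1 / l!` and
`1 / (n - l)!`.
-/

open MeasureTheory Polynomial

/-- Nested integral `∫_{lo}^{hi} dx₁ ∫_{lo}^{x₁} dx₂ ⋯ ∫_{lo}^{x_{k-1}} dx_k f(x₁,…,x_k)`. -/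
noncomputable def nestedIntegral : (k : ℕ) → ℝ → ℝ → ((Fin k → ℝ) → ℝ) → ℝ
  | 0, _, _, f => f (fun i => i.elim0)
  | k + 1, lo, hi, f =>
      ∫ x in lo..hi, nestedIntegral k lo x (fun v => f (Fin.cons x v))

theorem Fin.smul_cons {M α : Type*} [SMul M α] {n : ℕ} (c : M) (x : α) (v : Fin n → α) :
    c • (Fin.cons x v : Fin (n + 1) → α) = Fin.cons (c • x) (c • v) := by
  ext j
  refine Fin.cases ?_ (fun i => ?_) j <;> simp

theorem Fin.smul_append {M α : Type*} [SMul M α] {m n : ℕ} (c : M) (a : Fin m → α)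
    (b : Fin n → α) : c • Fin.append a b = Fin.append (c • a) (c • b) := by
  ext j
  refine Fin.addCases (fun i => ?_) (fun i => ?_) j <;> simp

theorem nestedIntegral_const_mul (k : ℕ) (lo hi c : ℝ) (f : (Fin k → ℝ) → ℝ) :
    nestedIntegral k lo hi (fun v => c * f v) = c * nestedIntegral k lo hi f := by
  induction k generalizing hi with
  | zero => rfl
  | succ k ih =>
    simp only [nestedIntegral, ih, intervalIntegral.integral_const_mul]

theorem nestedIntegral_mul_mul (k : ℕ) (c lo hi : ℝ) (f : (Fin k → ℝ) → ℝ) :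
    nestedIntegral k (c * lo) (c * hi) f = c ^ k * nestedIntegral k lo hi (fun v => f (c • v)) := by
  induction k generalizing hi with
  | zero => simp only [nestedIntegral, pow_zero, one_mul]; congr 1; exact funext (·.elim0)
  | succ k ih =>
    simp only [nestedIntegral]
    rw [← intervalIntegral.smul_integral_comp_mul_left]
    simp only [ih, Fin.smul_cons, smul_eq_mul, intervalIntegral.integral_const_mul, pow_succ]
    ring

theorem abs_nestedIntegral_le (k : ℕ) {lo hi M : ℝ} {f : (Fin k → ℝ) → ℝ} (hle : lo ≤ hi)
    (hf : ∀ v : Fin k → ℝ, (∀ i, v i ∈ Set.Icc lo hi) → |f v| ≤ M) :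
    |nestedIntegral k lo hi f| ≤ M * (hi - lo) ^ k / k.factorial := by
  induction k generalizing hi with
  | zero => simpa [nestedIntegral] using hf _ finZeroElim
  | succ k ih =>
    have hslice : ∀ x ∈ Set.Ioc lo hi,
        ‖nestedIntegral k lo x (fun v => f (Fin.cons x v))‖ ≤ M * (x - lo) ^ k / k.factorial := by
      refine fun x hx => ih hx.1.le fun v hv => hf _ (Fin.cases ⟨hx.1.le, hx.2⟩ fun i => ?_)
      exact ⟨(hv i).1, (hv i).2.trans hx.2⟩
    calc |nestedIntegral (k + 1) lo hi f|
        ≤ ∫ x in lo..hi, M * (x - lo) ^ k / k.factorial :=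
          intervalIntegral.norm_integral_le_of_norm_le hle (.of_forall hslice)
            (Continuous.intervalIntegrable (by fun_prop) _ _)
      _ = M * (hi - lo) ^ (k + 1) / (k + 1).factorial := by
          simp only [intervalIntegral.integral_div, intervalIntegral.integral_const_mul,
            intervalIntegral.integral_comp_sub_right (fun x => x ^ k), integral_pow,
            Nat.factorial_succ]
          push_cast
          field_simp
          ring

theorem nestedIntegral_nestedIntegral_mul_of_homogeneous {l k d : ℕ}
    {F : (Fin (l + k) → ℝ) → ℝ} (hF : ∀ (c : ℝ) x, F (c • x) = c ^ d * F x) (t a b c e : ℝ) :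
    nestedIntegral l (t * a) (t * b)
        (fun w₁ => nestedIntegral k (t * c) (t * e) (fun w₂ => F (Fin.append w₁ w₂))) =
      t ^ (l + k + d) *
        nestedIntegral l a b (fun w₁ => nestedIntegral k c e (fun w₂ => F (Fin.append w₁ w₂))) := by
  simp only [nestedIntegral_mul_mul, ← Fin.smul_append, hF, nestedIntegral_const_mul]
  ring

theorem prod_sub_pow_smul {ι κ : Type*} [Fintype ι] (σ τ : ι → κ) (z : ι → ℕ) (c : ℝ)
    (x : κ → ℝ) :
    ∏ i, ((c • x) (σ i) - (c • x) (τ i)) ^ z i =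
      c ^ (∑ i, z i) * ∏ i, (x (σ i) - x (τ i)) ^ z i := by
  simp only [Pi.smul_apply, smul_eq_mul, ← mul_sub, mul_pow, Finset.prod_mul_distrib,
    Finset.prod_pow_eq_pow_sum]

theorem abs_prod_sub_pow_le {ι κ : Type*} [Fintype ι] (σ τ : ι → κ) (z : ι → ℕ) {a b : ℝ}
    {x : κ → ℝ} (hx : ∀ j, x j ∈ Set.Icc a b) :
    |∏ i, (x (σ i) - x (τ i)) ^ z i| ≤ (b - a) ^ ∑ i, z i := by
  rw [Finset.abs_prod, ← Finset.prod_pow_eq_pow_sum]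
  gcongr with i
  rw [abs_pow, ← Real.dist_eq]
  gcongr
  exact Real.dist_le_of_mem_Icc (hx _) (hx _)

theorem eval_zero_iterate_derivative_X_pow {R : Type*} [CommSemiring R] (j n : ℕ) :
    (derivative^[j] (X ^ n : R[X])).eval 0 = if j = n then (n.factorial : R) else 0 := by
  rw [iterate_derivative_X_pow_eq_natCast_mul, eval_mul, eval_natCast, eval_pow, eval_X]
  rcases lt_trichotomy j n with h | rfl | h
  · simp [h.ne, zero_pow (Nat.sub_ne_zero_of_lt h)]
  · simp [Nat.descFactorial_self]
  · simp [h.ne', Nat.descFactorial_eq_zero_iff_lt.mpr h]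

theorem sum_mul_prod_eval_zero_iterate_derivative_X_pow {R ι : Type*} [CommSemiring R]
    [Fintype ι] [DecidableEq ι] {S : Finset (ι → ℕ)} (v : (ι → ℕ) → R) {z : ι → ℕ} (hz : z ∈ S) :
    ∑ z' ∈ S, v z' * ∏ i, (derivative^[z' i] (X ^ z i : R[X])).eval 0 =
      v z * ∏ i, ((z i).factorial : R) := by
  have hext (z' : ι → ℕ) : (∀ i, z' i = z i) ↔ z' = z := funext_iff.symm
  simp only [eval_zero_iterate_derivative_X_pow, Finset.prod_ite_zero, Finset.mem_univ,
    true_implies, hext, mul_ite, mul_zero, Finset.sum_ite_eq', hz, if_true]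

theorem abs_nestedIntegral_nestedIntegral_append_le {l k : ℕ} {a b c M : ℝ}
    {F : (Fin (l + k) → ℝ) → ℝ} (hab : a ≤ b) (hbc : b ≤ c)
    (hF : ∀ x, (∀ j, x j ∈ Set.Icc a c) → |F x| ≤ M) :
    |nestedIntegral l b c (fun w₁ => nestedIntegral k a b (fun w₂ => F (Fin.append w₁ w₂)))| ≤
      M * (b - a) ^ k / k.factorial * (c - b) ^ l / l.factorial := by
  refine abs_nestedIntegral_le l hbc fun w₁ hw₁ => abs_nestedIntegral_le k hab fun w₂ hw₂ => hF _ ?_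
  simp only [Fin.forall_fin_add, Fin.append_left, Fin.append_right]
  exact ⟨fun i => Set.Icc_subset_Icc hab le_rfl (hw₁ i),
    fun i => Set.Icc_subset_Icc le_rfl hbc (hw₂ i)⟩

theorem iteratedDeriv_pow_mul_zero (m : ℕ) (C : ℝ) :
    iteratedDeriv m (fun t : ℝ => t ^ m * C) 0 = m.factorial * C := by
  simp [Nat.descFactorial_self]

/-- The coefficients `v^{z,s}` defined by
`∂_t^m ∫_t^{2t}dt₁ ⋯ ∫_t^{t_{l-1}}dt_l ∫_0^t dt_{l+1} ⋯ ∫_0^{t_{n-1}}dt_n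
   ∏_{i=1}^u p_i(s_{2i} − s_{2i−1}) |_{t=0}
 = ∑_{z₁+⋯+z_u = m−n} v^{z,s} ∏_i p_i^{(z_i)}(0)`
(with `n = l + k` and `s₁,…,s_{2u}` distinct time variables, the identity holding for all
Taylor series, here represented by polynomials `p_i`) satisfy
`|v^{z,s}| ≤ 2^{m−n} m! / ((n−l)! l! z₁!⋯z_u!)`. -/
theorem nested_integral_coefficient_bound (l k u m : ℕ) (hm : l + k ≤ m)
    (s : Fin (2 * u) → Fin (l + k))
    (v : (Fin u → ℕ) → ℝ)
    (hv : ∀ p : Fin u → Polynomial ℝ,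
      iteratedDeriv m
        (fun t =>
          nestedIntegral l t (2 * t) (fun w1 =>
            nestedIntegral k 0 t (fun w2 =>
              ∏ i : Fin u,
                (p i).eval
                  (Fin.append w1 w2 (s ⟨2 * (i : ℕ) + 1, by have := i.isLt; omega⟩) -
                   Fin.append w1 w2 (s ⟨2 * (i : ℕ), by have := i.isLt; omega⟩))))) 0
      = ∑ z ∈ Finset.Nat.antidiagonalTuple u (m - (l + k)),
          v z * ∏ i : Fin u, (Polynomial.derivative^[z i] (p i)).eval 0) :
    ∀ z ∈ Finset.Nat.antidiagonalTuple u (m - (l + k)),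
      |v z| ≤ 2 ^ (m - (l + k)) * (m.factorial : ℝ) /
        ((k.factorial : ℝ) * (l.factorial : ℝ) * ∏ i : Fin u, ((z i).factorial : ℝ)) := by
  intro z hz
  have hzsum : ∑ i, z i = m - (l + k) := Finset.Nat.mem_antidiagonalTuple.mp hz
  set F : (Fin (l + k) → ℝ) → ℝ := fun x => ∏ i : Fin u,
    (x (s ⟨2 * (i : ℕ) + 1, by have := i.isLt; omega⟩) -
      x (s ⟨2 * (i : ℕ), by have := i.isLt; omega⟩)) ^ z i
  set C := nestedIntegral l 1 2 (fun w₁ => nestedIntegral k 0 1 (fun w₂ => F (Fin.append w₁ w₂)))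
  have hscale (t : ℝ) : nestedIntegral l t (2 * t)
      (fun w₁ => nestedIntegral k 0 t (fun w₂ => F (Fin.append w₁ w₂))) = t ^ m * C := by
    have := nestedIntegral_nestedIntegral_mul_of_homogeneous (F := F)
      (fun c x => (prod_sub_pow_smul _ _ z c x).trans (by rw [hzsum])) t 1 2 0 1
    rwa [mul_one, mul_zero, mul_comm t 2, Nat.add_sub_cancel' hm] at this
  have hcoeff : v z * ∏ i, ((z i).factorial : ℝ) = m.factorial * C := by
    have := hv (fun i => X ^ z i)
    simp only [eval_pow, eval_X] at this
    change iteratedDeriv m (fun t => nestedIntegral l t (2 * t)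
      (fun w₁ => nestedIntegral k 0 t (fun w₂ => F (Fin.append w₁ w₂)))) 0 = _ at this
    rw [sum_mul_prod_eval_zero_iterate_derivative_X_pow v hz] at this
    simpa only [hscale, iteratedDeriv_pow_mul_zero] using this.symm
  have hF (x : Fin (l + k) → ℝ) (hx : ∀ j, x j ∈ Set.Icc (0 : ℝ) 2) :
      |F x| ≤ 2 ^ (m - (l + k)) := by
    simpa [hzsum] using abs_prod_sub_pow_le _ _ z hx
  have hC : |C| ≤ 2 ^ (m - (l + k)) / (k.factorial * l.factorial) := by
    refine (abs_nestedIntegral_nestedIntegral_append_le zero_le_one one_le_two hF).trans_eq ?_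
    norm_num [div_div]
  have hprod : (0 : ℝ) < ∏ i, ((z i).factorial : ℝ) := by positivity
  calc |v z| = m.factorial * |C| / ∏ i, ((z i).factorial : ℝ) := by
        rw [eq_div_iff hprod.ne', ← abs_of_pos hprod, ← abs_mul, hcoeff, abs_mul, Nat.abs_cast]
    _ ≤ m.factorial * (2 ^ (m - (l + k)) / (k.factorial * l.factorial)) /
          ∏ i, ((z i).factorial : ℝ) := by gcongr
    _ = _ := by field_simp
end

section
/- Pauli coefficient recovery: let T(X) = ∑_{c,d} ξ_{c,d} P_c X P_d be a Hermiticity-preserving linear map on N-qubit operators, where P_c, P_d run over phaseless N-qubit Pauli strings. Define O_{a,b} = 2^{−N} Tr(P_a T(P_b)). Then the coefficients are recovered linearly via ξ_{c,d} = ∑_{a,b} G^{−1}_{(c,d),(a,b)} O_{a,b} with G^{−1}_{(c,d),(a,b)} = 2^{−3N} Tr(P_c P_a P_d P_b); moreover, for fixed (e,f), for each P_a there is exactly one phaseless Pauli P_b with G^{−1}_{(e,f),(a,b)} ≠ 0 (the one proportional to (P_e P_a P_f)†), each nonzero entry has modulus 4^{−N}, and consequently if each O_{a,b} is estimated to additive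 precision ε then each ξ_{e,f} is recovered to additive precision ε. -/
/-!
The Pauli strings `P_a` are trace-orthogonal, `Tr(P_a P_b) = 2^N δ_ab`, and satisfy the
completeness relation `∑_a P_a ⊗ P_a = 2^N SWAP`. Completeness yields
`∑_a Tr(P_a A) Tr(P_a B) = 2^N Tr(AB)` and `∑_a P_a X P_a = 2^N Tr(X) 1`. Applying the first to
the sum over `a`, the second to the sum over `b`, and then orthogonality shows that the matrix
`Tr(P_c P_a P_d P_b)` inverts `Tr(P_a P_c' P_b P_d')` up to the factor `2^{4N}`, which is the
recovery formula. Both properties pass from one qubit to `N` qubits through the Kronecker product,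
as does the fact that Pauli matrices multiply, up to a unimodular phase, by xor of their labels.
By the latter, `Tr(P_e P_a P_f P_b)` vanishes except at `b = e ⊕ a ⊕ f`, where it has modulus
`2^N`; so each row of `G⁻¹` has `4^N` nonzero entries of modulus `4^{-N}`, and the error bound is
the triangle inequality.
-/

open Matrix

/-- The four single-qubit Pauli matrices `I, σˣ, σʸ, σᶻ`. -/
noncomputable def pauliMat : Fin 4 → Matrix (Fin 2) (Fin 2) ℂ
  | 0 => 1
  | 1 => !![0, 1; 1, 0]
  | 2 => !![0, -Complex.I; Complex.I, 0]
  | 3 => !![1, 0; 0, -1]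

/-- A phaseless `N`-qubit Pauli string, as a tensor (Kronecker) product of Pauli matrices. -/
noncomputable def pauliString (N : ℕ) (p : Fin N → Fin 4) :
    Matrix (Fin N → Fin 2) (Fin N → Fin 2) ℂ :=
  fun x y => ∏ i, pauliMat (p i) (x i) (y i)

theorem Fintype.sum_sum_sum_sum_comm {α β γ δ M : Type*} [Fintype α] [Fintype β] [Fintype γ]
    [Fintype δ] [AddCommMonoid M] (f : α → β → γ → δ → M) :
    ∑ a, ∑ b, ∑ c, ∑ d, f a b c d = ∑ c, ∑ d, ∑ a, ∑ b, f a b c d := by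
  calc ∑ a, ∑ b, ∑ c, ∑ d, f a b c d = ∑ p : α × β, ∑ q : γ × δ, f p.1 p.2 q.1 q.2 := by
        simp only [Fintype.sum_prod_type]
    _ = ∑ q : γ × δ, ∑ p : α × β, f p.1 p.2 q.1 q.2 := Finset.sum_comm
    _ = ∑ c, ∑ d, ∑ a, ∑ b, f a b c d := by simp only [Fintype.sum_prod_type]

namespace Matrix

section Completeness

variable {κ n R : Type*} [Fintype κ] [DecidableEq n] [CommRing R]

/-- `∑ₐ Pₐ ⊗ Pₐ = k • SWAP`, written entrywise. -/
def CompletenessRelation (P : κ → Matrix n n R) (k : R) : Prop :=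
  ∀ i j l m, ∑ a, P a i j * P a l m = if i = m ∧ j = l then k else 0

variable [Fintype n] {P : κ → Matrix n n R} {k : R}

theorem CompletenessRelation.sum_trace_mul_smul (hP : CompletenessRelation P k)
    (X : Matrix n n R) : ∑ a, trace (P a * X) • P a = k • X := by
  unfold CompletenessRelation at hP
  ext l m
  simp only [Matrix.sum_apply, Matrix.smul_apply, smul_eq_mul, trace, diag, mul_apply,
    Finset.sum_mul]
  rw [Finset.sum_comm]
  refine (Finset.sum_congr rfl fun i _ => Finset.sum_comm).trans ?_
  simp only [mul_right_comm _ (X _ _), ← Finset.sum_mul, hP, ite_and, ite_mul, zero_mul]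
  simp

theorem CompletenessRelation.sum_mul_mul (hP : CompletenessRelation P k) (X : Matrix n n R) :
    ∑ a, P a * X * P a = (k * trace X) • (1 : Matrix n n R) := by
  unfold CompletenessRelation at hP
  ext i m
  simp only [Matrix.sum_apply, Matrix.smul_apply, smul_eq_mul, trace, diag, mul_apply,
    Finset.sum_mul]
  rw [Finset.sum_comm]
  refine (Finset.sum_congr rfl fun l _ => Finset.sum_comm).trans ?_
  simp only [mul_right_comm _ (X _ _), ← Finset.sum_mul, hP, ite_and, ite_mul, zero_mul]
  simp [one_apply, Finset.mul_sum]

theorem CompletenessRelation.sum_trace_mul_mul_trace_mul (hP : CompletenessRelation P k)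
    (A B : Matrix n n R) :
    ∑ a, trace (P a * A) * trace (P a * B) = k * trace (A * B) := by
  calc ∑ a, trace (P a * A) * trace (P a * B) = trace ((∑ a, trace (P a * A) • P a) * B) := by
        simp only [Finset.sum_mul, Matrix.smul_mul, trace_sum, trace_smul, smul_eq_mul]
    _ = k * trace (A * B) := by
        rw [hP.sum_trace_mul_smul, Matrix.smul_mul, trace_smul, smul_eq_mul]

theorem CompletenessRelation.sum_trace_mul_mul_mul (hP : CompletenessRelation P k)
    (A B : Matrix n n R) :
    ∑ a, trace (P a * A * P a * B) = k * trace A * trace B := by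
  rw [← trace_sum, ← Finset.sum_mul, hP.sum_mul_mul, Matrix.smul_mul, trace_smul, Matrix.one_mul,
    smul_eq_mul]

variable [DecidableEq κ]

def TraceOrthogonal (P : κ → Matrix n n R) (k : R) : Prop :=
  ∀ a b, trace (P a * P b) = if a = b then k else 0

theorem sum_trace_mul_trace_of_completenessRelation (hO : TraceOrthogonal P k)
    (hC : CompletenessRelation P k) (c d c' d' : κ) :
    ∑ a, ∑ b, trace (P c * P a * P d * P b) * trace (P a * P c' * P b * P d') =
      if c = c' ∧ d = d' then k ^ 4 else 0 := by
  have cycle₁ : ∀ a b, trace (P c * P a * P d * P b) = trace (P a * (P d * P b * P c)) := by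
    intro a b
    simp only [Matrix.mul_assoc]
    rw [trace_mul_comm (P c)]
    simp only [Matrix.mul_assoc]
  have cycle₂ : ∀ a b, trace (P a * P c' * P b * P d') = trace (P a * (P c' * P b * P d')) := by
    intro a b
    simp only [Matrix.mul_assoc]
  have cycle₃ : ∀ b, trace (P d * P b * P c * (P c' * P b * P d')) =
      trace (P b * (P c * P c') * P b * (P d' * P d)) := by
    intro b
    simp only [Matrix.mul_assoc]
    rw [trace_mul_comm (P d)]
    simp only [Matrix.mul_assoc]
  calc ∑ a, ∑ b, trace (P c * P a * P d * P b) * trace (P a * P c' * P b * P d')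
      = ∑ b, ∑ a, trace (P a * (P d * P b * P c)) * trace (P a * (P c' * P b * P d')) := by
        rw [Finset.sum_comm]
        simp only [cycle₁, cycle₂]
    _ = k * (k * trace (P c * P c') * trace (P d' * P d)) := by
        simp only [hC.sum_trace_mul_mul_trace_mul, cycle₃, ← Finset.mul_sum,
          hC.sum_trace_mul_mul_mul]
    _ = if c = c' ∧ d = d' then k ^ 4 else 0 := by
        simp only [hO _ _, @eq_comm _ d' d, ite_and]
        split_ifs <;> ring

end Completeness

section Recovery

variable {κ n K : Type*} [Fintype κ] [Fintype n] [DecidableEq κ] [DecidableEq n] [Field K]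
  {P : κ → Matrix n n K} {k : K}

theorem TraceOrthogonal.eq_sum_trace_mul_observable (hO : TraceOrthogonal P k)
    (hC : CompletenessRelation P k) (hk : k ≠ 0) (ξ O : κ → κ → K)
    (hobs : ∀ a b, O a b = k⁻¹ * trace (P a * ∑ c, ∑ d, ξ c d • (P c * P b * P d))) (c d : κ) :
    ξ c d = ∑ a, ∑ b, (k ^ 3)⁻¹ * trace (P c * P a * P d * P b) * O a b := by
  have expand : ∀ a b,
      O a b = k⁻¹ * ∑ c', ∑ d', ξ c' d' * trace (P a * P c' * P b * P d') := by
    intro a b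
    simp only [hobs, Matrix.mul_sum, trace_sum, Matrix.mul_smul, trace_smul, smul_eq_mul,
      Matrix.mul_assoc]
  calc ξ c d = (k ^ 4)⁻¹ * ∑ c', ∑ d', ξ c' d' * if c = c' ∧ d = d' then k ^ 4 else 0 := by
        simp only [ite_and, mul_ite, mul_zero, Finset.sum_ite_irrel, Finset.sum_ite_eq,
          Finset.mem_univ, if_true, Finset.sum_const_zero]
        field_simp
    _ = ∑ c', ∑ d', ∑ a, ∑ b,
          (k ^ 3)⁻¹ * trace (P c * P a * P d * P b) *
            (k⁻¹ * (ξ c' d' * trace (P a * P c' * P b * P d'))) := by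
        simp only [← sum_trace_mul_trace_of_completenessRelation hO hC, Finset.mul_sum]
        refine Finset.sum_congr rfl fun c' _ => Finset.sum_congr rfl fun d' _ =>
          Finset.sum_congr rfl fun a _ => Finset.sum_congr rfl fun b _ => ?_
        field_simp
    _ = ∑ a, ∑ b, (k ^ 3)⁻¹ * trace (P c * P a * P d * P b) * O a b := by
        rw [Fintype.sum_sum_sum_sum_comm]
        simp only [expand, Finset.mul_sum]

end Recovery

section PiKron

variable {ι α β γ R : Type*} [Fintype ι] [CommSemiring R]

def piKron (M : ι → Matrix α β R) : Matrix (ι → α) (ι → β) R :=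
  fun x y => ∏ i, M i (x i) (y i)

theorem piKron_mul [DecidableEq ι] [Fintype β] (M : ι → Matrix α β R) (M' : ι → Matrix β γ R) :
    piKron M * piKron M' = piKron fun i => M i * M' i := by
  ext x z
  simp only [mul_apply, piKron, ← Finset.prod_mul_distrib]
  exact (Fintype.prod_sum fun i b => M i (x i) b * M' i b (z i)).symm

theorem piKron_smul (c : ι → R) (M : ι → Matrix α β R) :
    (piKron fun i => c i • M i) = (∏ i, c i) • piKron M := by
  ext x y
  simp [piKron, Finset.prod_mul_distrib]

theorem trace_piKron [DecidableEq ι] [Fintype α] (M : ι → Matrix α α R) :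
    trace (piKron M) = ∏ i, trace (M i) :=
  (Fintype.prod_sum fun i a => M i a a).symm

end PiKron

section PiKronFamily

variable {ι κ n R : Type*} [Fintype ι] [DecidableEq ι] [CommRing R] {M : κ → Matrix n n R} {k : R}

theorem TraceOrthogonal.piKron [DecidableEq κ] [Fintype n] (hM : TraceOrthogonal M k) :
    TraceOrthogonal (fun p : ι → κ => piKron fun i => M (p i)) (k ^ Fintype.card ι) := by
  intro p q
  simp only [piKron_mul, trace_piKron, hM _ _, Fintype.prod_ite_zero, Finset.prod_const,
    Finset.card_univ, funext_iff]

theorem CompletenessRelation.piKron [Fintype κ] [DecidableEq n] (hM : CompletenessRelation M k) :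
    CompletenessRelation (fun p : ι → κ => piKron fun i => M (p i)) (k ^ Fintype.card ι) := by
  intro x y z w
  simp only [Matrix.piKron, ← Finset.prod_mul_distrib]
  rw [← Fintype.prod_sum fun i a => M a (x i) (y i) * M a (z i) (w i)]
  simp only [hM _ _ _ _, Fintype.prod_ite_zero, Finset.prod_const, Finset.card_univ, funext_iff,
    forall_and]

end PiKronFamily

end Matrix

theorem traceOrthogonal_pauliMat : TraceOrthogonal pauliMat 2 := by
  intro i j
  fin_cases i <;> fin_cases j <;> simp [pauliMat, trace, Fin.sum_univ_two] <;> norm_num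

theorem completenessRelation_pauliMat : CompletenessRelation pauliMat 2 := by
  intro x y z w
  fin_cases x <;> fin_cases y <;> fin_cases z <;> fin_cases w <;>
    simp [pauliMat, Fin.sum_univ_four] <;> norm_num

/-- Up to phase, Pauli matrices multiply like `(ℤ/2)²`, which the indexing `I, X, Y, Z ↦ 0, 1, 2, 3`
turns into bitwise xor. Since `σₖ² = 1`, the phase is half the trace of `σᵢσⱼσₖ`. -/
theorem pauliMat_mul_eq_smul (i j : Fin 4) :
    ∃ ω : ℂ, ‖ω‖ = 1 ∧ pauliMat i * pauliMat j = ω • pauliMat (i ^^^ j) := by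
  refine ⟨trace (pauliMat i * pauliMat j * pauliMat (i ^^^ j)) / 2, ?_, ?_⟩ <;>
    fin_cases i <;> fin_cases j
  all_goals simp [pauliMat, trace, Matrix.one_fin_two]

theorem pauliString_eq_piKron (N : ℕ) (p : Fin N → Fin 4) :
    pauliString N p = piKron fun i => pauliMat (p i) :=
  rfl

theorem traceOrthogonal_pauliString (N : ℕ) : TraceOrthogonal (pauliString N) (2 ^ N) := by
  have h := traceOrthogonal_pauliMat.piKron (ι := Fin N)
  rw [Fintype.card_fin] at h
  exact h

theorem completenessRelation_pauliString (N : ℕ) :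
    CompletenessRelation (pauliString N) (2 ^ N) := by
  have h := completenessRelation_pauliMat.piKron (ι := Fin N)
  rw [Fintype.card_fin] at h
  exact h

theorem pauliString_mul_eq_smul {N : ℕ} (a b : Fin N → Fin 4) :
    ∃ ω : ℂ, ‖ω‖ = 1 ∧
      pauliString N a * pauliString N b = ω • pauliString N fun i => a i ^^^ b i := by
  choose ω hω hmul using fun i => pauliMat_mul_eq_smul (a i) (b i)
  refine ⟨∏ i, ω i, by simp [hω], ?_⟩
  simp only [pauliString_eq_piKron, piKron_mul, hmul, piKron_smul]

theorem norm_trace_pauliString_mul_mul_mul {N : ℕ} (e a f b : Fin N → Fin 4) :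
    ‖trace (pauliString N e * pauliString N a * pauliString N f * pauliString N b)‖ =
      if b = (fun i => e i ^^^ a i ^^^ f i) then 2 ^ N else 0 := by
  obtain ⟨ω, hω, hea⟩ := pauliString_mul_eq_smul e a
  obtain ⟨ω', hω', heaf⟩ := pauliString_mul_eq_smul (fun i => e i ^^^ a i) f
  rw [hea, Matrix.smul_mul, heaf, smul_smul, Matrix.smul_mul, trace_smul,
    traceOrthogonal_pauliString, smul_eq_mul, norm_mul, norm_mul, hω, hω']
  by_cases h : b = fun i => e i ^^^ a i ^^^ f i
  · simp [h]
  · simp [h, Ne.symm h]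

theorem trace_pauliString_mul_mul_mul_ne_zero_iff {N : ℕ} (e a f b : Fin N → Fin 4) :
    trace (pauliString N e * pauliString N a * pauliString N f * pauliString N b) ≠ 0 ↔
      b = fun i => e i ^^^ a i ^^^ f i := by
  rw [← norm_ne_zero_iff, norm_trace_pauliString_mul_mul_mul]
  simp

/-- The entry `G⁻¹_{(c,d),(a,b)}` of the inverse Gram matrix. -/
noncomputable def recoveryCoeff (N : ℕ) (c d a b : Fin N → Fin 4) : ℂ :=
  (2 : ℂ) ^ (-(3 * N : ℤ)) *
    trace (pauliString N c * pauliString N a * pauliString N d * pauliString N b)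

theorem eq_sum_recoveryCoeff_mul {N : ℕ} (ξ O : (Fin N → Fin 4) → (Fin N → Fin 4) → ℂ)
    (hO : ∀ a b, O a b = (2 : ℂ) ^ (-(N : ℤ)) *
      trace (pauliString N a *
        ∑ c, ∑ d, ξ c d • (pauliString N c * pauliString N b * pauliString N d)))
    (c d : Fin N → Fin 4) :
    ξ c d = ∑ a, ∑ b, recoveryCoeff N c d a b * O a b := by
  have h3N : (2 : ℂ) ^ (-(3 * N : ℤ)) = (((2 : ℂ) ^ N) ^ 3)⁻¹ := by
    rw [_root_.zpow_neg, ← pow_mul, ← zpow_natCast]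
    push_cast
    ring_nf
  simp only [_root_.zpow_neg, zpow_natCast] at hO
  simpa only [recoveryCoeff, h3N] using
    (traceOrthogonal_pauliString N).eq_sum_trace_mul_observable
      (completenessRelation_pauliString N) (pow_ne_zero N two_ne_zero) ξ O hO c d

theorem norm_recoveryCoeff {N : ℕ} (e f a b : Fin N → Fin 4) :
    ‖recoveryCoeff N e f a b‖ =
      if b = (fun i => e i ^^^ a i ^^^ f i) then (4 : ℝ) ^ (-(N : ℤ)) else 0 := by
  rw [recoveryCoeff, norm_mul, norm_trace_pauliString_mul_mul_mul, norm_zpow, Complex.norm_two,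
    mul_ite, mul_zero]
  congr 1
  rw [← zpow_natCast (2 : ℝ) N, ← zpow_add₀ two_ne_zero, show (4 : ℝ) = 2 ^ (2 : ℤ) by norm_num,
    ← _root_.zpow_mul]
  congr 1
  ring

theorem norm_sum_sum_mul_sub_le {α β 𝕜 : Type*} [Fintype α] [Fintype β] [SeminormedRing 𝕜]
    (w x y : α → β → 𝕜) {ε : ℝ} (hxy : ∀ a b, ‖x a b - y a b‖ ≤ ε) :
    ‖∑ a, ∑ b, w a b * x a b - ∑ a, ∑ b, w a b * y a b‖ ≤ (∑ a, ∑ b, ‖w a b‖) * ε := by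
  simp only [← Finset.sum_sub_distrib, ← mul_sub, Finset.sum_mul]
  refine (norm_sum_le _ _).trans (Finset.sum_le_sum fun a _ => (norm_sum_le _ _).trans
    (Finset.sum_le_sum fun b _ => (norm_mul_le _ _).trans ?_))
  exact mul_le_mul_of_nonneg_left (hxy a b) (norm_nonneg _)

theorem sum_sum_norm_recoveryCoeff {N : ℕ} (e f : Fin N → Fin 4) :
    ∑ a, ∑ b, ‖recoveryCoeff N e f a b‖ = 1 := by
  simp only [norm_recoveryCoeff, Finset.sum_ite_eq', Finset.mem_univ, if_true, Finset.sum_const,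
    Finset.card_univ, Fintype.card_fun, Fintype.card_fin, nsmul_eq_mul]
  push_cast
  rw [← zpow_natCast, ← zpow_add₀ (by norm_num), add_neg_cancel, zpow_zero]

theorem pauli_coefficient_recovery_general (N : ℕ)
    (ξ : (Fin N → Fin 4) → (Fin N → Fin 4) → ℂ)
    (O : (Fin N → Fin 4) → (Fin N → Fin 4) → ℂ)
    (hO : ∀ a b, O a b = (2 : ℂ) ^ (-(N : ℤ)) *
      Matrix.trace (pauliString N a *
        ∑ c, ∑ d, ξ c d • (pauliString N c * pauliString N b * pauliString N d))) :
    (∀ c d, ξ c d = ∑ a, ∑ b,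
        ((2 : ℂ) ^ (-(3 * N : ℤ)) *
          Matrix.trace (pauliString N c * pauliString N a * pauliString N d * pauliString N b))
          * O a b)
    ∧ (∀ e f a, ∃! b,
        Matrix.trace (pauliString N e * pauliString N a * pauliString N f * pauliString N b)
          ≠ 0)
    ∧ (∀ e f a b,
        Matrix.trace (pauliString N e * pauliString N a * pauliString N f * pauliString N b)
          ≠ 0 →
        norm ((2 : ℂ) ^ (-(3 * N : ℤ)) *
          Matrix.trace (pauliString N e * pauliString N a * pauliString N f * pauliString N b))
          = (4 : ℝ) ^ (-(N : ℤ)))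
    ∧ (∀ (ε : ℝ) (Ohat : (Fin N → Fin 4) → (Fin N → Fin 4) → ℂ),
        0 ≤ ε →
        (∀ a b, norm (Ohat a b - O a b) ≤ ε) →
        ∀ e f, norm ((∑ a, ∑ b,
          ((2 : ℂ) ^ (-(3 * N : ℤ)) *
            Matrix.trace
              (pauliString N e * pauliString N a * pauliString N f * pauliString N b))
            * Ohat a b) - ξ e f) ≤ ε) := by
  have recovery := eq_sum_recoveryCoeff_mul ξ O hO
  refine ⟨recovery, fun e f a => ?_, fun e f a b hb => ?_, fun ε Ohat _ hOhat e f => ?_⟩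
  · exact ⟨_, (trace_pauliString_mul_mul_mul_ne_zero_iff e a f _).2 rfl,
      fun b hb => (trace_pauliString_mul_mul_mul_ne_zero_iff e a f b).1 hb⟩
  · exact (norm_recoveryCoeff e f a b).trans
      (if_pos ((trace_pauliString_mul_mul_mul_ne_zero_iff e a f b).1 hb))
  · calc ‖∑ a, ∑ b, recoveryCoeff N e f a b * Ohat a b - ξ e f‖
        = ‖∑ a, ∑ b, recoveryCoeff N e f a b * Ohat a b -
            ∑ a, ∑ b, recoveryCoeff N e f a b * O a b‖ := by rw [← recovery]
      _ ≤ (∑ a, ∑ b, ‖recoveryCoeff N e f a b‖) * ε := norm_sum_sum_mul_sub_le _ _ _ hOhat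
      _ = ε := by rw [sum_sum_norm_recoveryCoeff, one_mul]

/-- Pauli coefficient recovery for a Hermiticity-preserving map
`T(X) = ∑_{c,d} ξ_{c,d} P_c X P_d` from the observables `O_{a,b} = 2^{−N} Tr(P_a T(P_b))`:
`ξ_{c,d} = ∑_{a,b} G⁻¹_{(c,d),(a,b)} O_{a,b}` with
`G⁻¹_{(c,d),(a,b)} = 2^{−3N} Tr(P_c P_a P_d P_b)`; for fixed `(e,f)` and each `a` exactly
one `b` gives a nonzero entry, each nonzero entry has modulus `4^{−N}`, and estimating each
`O_{a,b}` to additive precision `ε` recovers each `ξ_{e,f}` to additive precision `ε`. -/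
theorem pauli_coefficient_recovery (N : ℕ)
    (ξ : (Fin N → Fin 4) → (Fin N → Fin 4) → ℂ)
    (hherm : ∀ c d, (starRingEnd ℂ) (ξ c d) = ξ d c)
    (O : (Fin N → Fin 4) → (Fin N → Fin 4) → ℂ)
    (hO : ∀ a b, O a b = (2 : ℂ) ^ (-(N : ℤ)) *
      Matrix.trace (pauliString N a *
        ∑ c, ∑ d, ξ c d • (pauliString N c * pauliString N b * pauliString N d))) :
    (∀ c d, ξ c d = ∑ a, ∑ b,
        ((2 : ℂ) ^ (-(3 * N : ℤ)) *
          Matrix.trace (pauliString N c * pauliString N a * pauliString N d * pauliString N b))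
          * O a b)
    ∧ (∀ e f a, ∃! b,
        Matrix.trace (pauliString N e * pauliString N a * pauliString N f * pauliString N b)
          ≠ 0)
    ∧ (∀ e f a b,
        Matrix.trace (pauliString N e * pauliString N a * pauliString N f * pauliString N b)
          ≠ 0 →
        norm ((2 : ℂ) ^ (-(3 * N : ℤ)) *
          Matrix.trace (pauliString N e * pauliString N a * pauliString N f * pauliString N b))
          = (4 : ℝ) ^ (-(N : ℤ)))
    ∧ (∀ (ε : ℝ) (Ohat : (Fin N → Fin 4) → (Fin N → Fin 4) → ℂ),
        0 ≤ ε →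
        (∀ a b, norm (Ohat a b - O a b) ≤ ε) →
        ∀ e f, norm ((∑ a, ∑ b,
          ((2 : ℂ) ^ (-(3 * N : ℤ)) *
            Matrix.trace
              (pauliString N e * pauliString N a * pauliString N f * pauliString N b))
            * Ohat a b) - ξ e f) ≤ ε) :=
  pauli_coefficient_recovery_general N ξ O hO
end

section
/- Nested commutator Lieb-Robinson summation bound: let {P_a} be local Hamiltonian terms satisfying a single-commutator Lieb-Robinson-type bound ‖[A,B]‖ ≤ 2‖A‖‖B‖ c · exp(−a · dist(supp A, supp B)) with constants a, c > 0, and assume ∑_{a'} exp(−(a/d)·dist(supp P_{a'}, supp A)) ≤ d/a for every depth d ≥ 1. Then the sum over all depth-d nested commutators satisfies ∑_{a_1,...,a_d} ‖[P_{a_1}, [P_{a_2}, ..., [P_{a_d}, A]...]]‖ ≤ (2c/a)^d · d^d · ‖A‖. -/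
/-- The nested commutator `[P₁, [P₂, …, [P_d, X]…]]`. -/
def nestedComm {A : Type*} [Ring A] : (d : ℕ) → (Fin d → A) → A → A
  | 0, _, X => X
  | d + 1, f, X =>
      f 0 * nestedComm d (fun i => f i.succ) X - nestedComm d (fun i => f i.succ) X * f 0

/-- Nested commutator Lieb-Robinson summation bound: if the local terms
`P_a` satisfy the (Lieb-Robinson-derived) per-tuple bound
`‖[P_{a₁},…,[P_{a_d}, A₀]]‖ ≤ (2c)^d ‖A₀‖ exp(−a · dist(supp P_{a_j}, supp A₀))` for every
`j`, and `∑_{a'} exp(−(a/d)·dist(supp P_{a'}, supp A₀)) ≤ d/a` for every depth `d ≥ 1`,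
then `∑_{a₁,…,a_d} ‖[P_{a₁},…,[P_{a_d},A₀]]‖ ≤ (2c/a)^d d^d ‖A₀‖`. -/
theorem nested_commutator_sum_bound {A : Type*} [NormedRing A] {ι : Type*} [Fintype ι]
    (P : ι → A) (A₀ : A) (a c : ℝ) (ha : 0 < a) (hc : 0 < c)
    (D : ι → ℝ) (hD : ∀ i, 0 ≤ D i)
    (hcomm : ∀ (d : ℕ) (f : Fin d → ι) (j : Fin d),
      ‖nestedComm d (fun i => P (f i)) A₀‖ ≤ (2 * c) ^ d * ‖A₀‖ * Real.exp (-a * D (f j)))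
    (hsum : ∀ d : ℕ, 1 ≤ d → ∑ i : ι, Real.exp (-(a / d) * D i) ≤ d / a) :
    ∀ d : ℕ, 1 ≤ d →
      ∑ f : Fin d → ι, ‖nestedComm d (fun i => P (f i)) A₀‖ ≤
        (2 * c / a) ^ d * (d : ℝ) ^ d * ‖A₀‖ := by
  intro d hd
  have hd0 : (d : ℝ) ≠ 0 := by positivity
  have h2c : (0 : ℝ) < 2 * c := by linarith
  -- per-tuple bound: ‖N f‖ ≤ (2c)^d ‖A₀‖ ∏_j exp(-(a/d) D (f j))
  have key : ∀ f : Fin d → ι,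
      ‖nestedComm d (fun i => P (f i)) A₀‖ ≤
        (2 * c) ^ d * ‖A₀‖ * ∏ j : Fin d, Real.exp (-(a / d) * D (f j)) := by
    intro f
    have hexp : ∀ j : Fin d, (0:ℝ) ≤ Real.exp (-(a / d) * D (f j)) :=
      fun j => (Real.exp_pos _).le
    have hRHS : (0:ℝ) ≤ (2 * c) ^ d * ‖A₀‖ * ∏ j : Fin d, Real.exp (-(a / d) * D (f j)) := by
      positivity
    have hpow : ‖nestedComm d (fun i => P (f i)) A₀‖ ^ d ≤
        ((2 * c) ^ d * ‖A₀‖ * ∏ j : Fin d, Real.exp (-(a / d) * D (f j))) ^ d := by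
      calc ‖nestedComm d (fun i => P (f i)) A₀‖ ^ d
          = ∏ j : Fin d, ‖nestedComm d (fun i => P (f i)) A₀‖ := by
            simp [Finset.prod_const]
        _ ≤ ∏ j : Fin d, ((2 * c) ^ d * ‖A₀‖ * Real.exp (-a * D (f j))) := by
            apply Finset.prod_le_prod (fun j _ => norm_nonneg _) (fun j _ => hcomm d f j)
        _ = ((2 * c) ^ d * ‖A₀‖ * ∏ j : Fin d, Real.exp (-(a / d) * D (f j))) ^ d := by
            rw [Finset.prod_mul_distrib, Finset.prod_mul_distrib, Finset.prod_const,
              Finset.prod_const, Finset.card_univ, Fintype.card_fin]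
            conv_rhs => rw [mul_pow, mul_pow, ← Finset.prod_pow]
            congr 1
            apply Finset.prod_congr rfl
            intro j _
            rw [← Real.exp_nat_mul]
            congr 1
            field_simp
    exact le_of_pow_le_pow_left₀ (by omega) hRHS hpow
  calc ∑ f : Fin d → ι, ‖nestedComm d (fun i => P (f i)) A₀‖
      ≤ ∑ f : Fin d → ι, (2 * c) ^ d * ‖A₀‖ * ∏ j : Fin d, Real.exp (-(a / d) * D (f j)) :=
        Finset.sum_le_sum fun f _ => key f
    _ = (2 * c) ^ d * ‖A₀‖ * (∑ i : ι, Real.exp (-(a / d) * D i)) ^ d := by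
        rw [← Finset.mul_sum, Fintype.sum_pow]
    _ ≤ (2 * c) ^ d * ‖A₀‖ * ((d : ℝ) / a) ^ d := by
        apply mul_le_mul_of_nonneg_left _ (by positivity)
        apply pow_le_pow_left₀ (Finset.sum_nonneg fun i _ => (Real.exp_pos _).le) (hsum d hd)
    _ = (2 * c / a) ^ d * (d : ℝ) ^ d * ‖A₀‖ := by
        rw [div_pow, div_pow]
        ring
end
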